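/- arXiv:2405.14255 — 4 statements merged into one kernel-verified Lean document; each statement's English description precedes it below -/
import Mathlib

section
/- One-step conditional bound for SPPM: under strong monotonicity, the iterate x^{k+1} = (I + γA_{ξ^k})^{-1}(x^k) satisfies E[‖x^{k+1} − x⋆‖² | F^k] ≤ (1+γμ)^{-2} ‖x^k − x⋆‖² + (1+γμ)^{-2} γ² σ⋆², where σ⋆² = E_ξ[‖a_ξ⋆‖²] with a_ξ⋆ ∈ A_ξ(x⋆) chosen so that E_ξ[a_ξ⋆] = 0. -/
/-!
Strong monotonicity makes the map `(p, u) ↦ p + γ u` on the graph of `A_ξ` expand distances by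
at least `1 + γμ`. Since `x^{k+1} + γ u = x^k` for some `u ∈ A_ξ(x^{k+1})` and `x⋆ + γ a_ξ⋆` is
the corresponding point for `x⋆`, this gives
`‖x^{k+1} - x⋆‖² ≤ (1 + γμ)⁻² ‖(x^k - x⋆) - γ a_ξ⋆‖²` pointwise in `ξ`. Taking expectations, the
cross term vanishes because `a_ξ⋆` has mean zero, leaving `‖x^k - x⋆‖² + γ² σ⋆²`.
-/

open RealInnerProductSpace MeasureTheory

section

variable {X : Type*} [NormedAddCommGroup X] [InnerProductSpace ℝ X]

def IsStronglyMonotone (A : X → Set X) (μ : ℝ) : Prop :=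
  ∀ x u y v, u ∈ A x → v ∈ A y → μ * ‖x - y‖ ^ 2 ≤ ⟪u - v, x - y⟫

theorem mul_norm_le_norm_add_smul {μ γ : ℝ} {d e : X} (hγ : 0 ≤ γ)
    (h : μ * ‖d‖ ^ 2 ≤ ⟪e, d⟫) : (1 + γ * μ) * ‖d‖ ≤ ‖d + γ • e‖ := by
  rcases (norm_nonneg d).eq_or_lt with hd | hd
  · rw [← hd, mul_zero]
    exact norm_nonneg _
  refine le_of_mul_le_mul_right ?_ hd
  calc (1 + γ * μ) * ‖d‖ * ‖d‖ ≤ ‖d‖ ^ 2 + γ * ⟪e, d⟫ := by nlinarith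
    _ = ⟪d + γ • e, d⟫ := by
      rw [inner_add_left, real_inner_self_eq_norm_sq, real_inner_smul_left]
    _ ≤ ‖d + γ • e‖ * ‖d‖ := real_inner_le_norm _ _

namespace IsStronglyMonotone

variable {A : X → Set X} {μ γ : ℝ} {p q u v : X}

theorem mul_norm_sub_le (hA : IsStronglyMonotone A μ) (hγ : 0 ≤ γ) (hu : u ∈ A p)
    (hv : v ∈ A q) : (1 + γ * μ) * ‖p - q‖ ≤ ‖(p + γ • u) - (q + γ • v)‖ := by
  have h := mul_norm_le_norm_add_smul (γ := γ) hγ (hA p u q v hu hv)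
  rwa [smul_sub, sub_add_sub_comm] at h

theorem norm_sub_sq_le (hA : IsStronglyMonotone A μ) (hγ : 0 ≤ γ) (hγμ : 0 < 1 + γ * μ)
    (hu : u ∈ A p) (hv : v ∈ A q) :
    ‖p - q‖ ^ 2 ≤ ((1 + γ * μ)⁻¹) ^ 2 * ‖(p + γ • u) - (q + γ • v)‖ ^ 2 := by
  rw [← div_le_iff₀' (by positivity), div_eq_mul_inv, inv_pow, inv_inv, ← mul_pow, mul_comm]
  exact pow_le_pow_left₀ (by positivity) (hA.mul_norm_sub_le hγ hu hv) 2

end IsStronglyMonotone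

section MeanZero

variable {Ω : Type*} [MeasurableSpace Ω] {P : Measure Ω} [IsProbabilityMeasure P] {a : Ω → X}

theorem integrable_norm_sub_sq (ha : Integrable a P) (ha2 : Integrable (fun ξ ↦ ‖a ξ‖ ^ 2) P)
    (x : X) : Integrable (fun ξ ↦ ‖x - a ξ‖ ^ 2) P := by
  have hinner : Integrable (fun ξ ↦ 2 * ⟪x, a ξ⟫) P :=
    ((innerSL ℝ x).integrable_comp ha).const_mul 2
  simp only [norm_sub_sq_real]
  exact ((integrable_const _).sub hinner).add ha2

theorem integral_norm_sub_sq_of_integral_eq_zero [CompleteSpace X] (ha : Integrable a P)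
    (ha2 : Integrable (fun ξ ↦ ‖a ξ‖ ^ 2) P) (hmean : ∫ ξ, a ξ ∂P = 0) (x : X) :
    ∫ ξ, ‖x - a ξ‖ ^ 2 ∂P = ‖x‖ ^ 2 + ∫ ξ, ‖a ξ‖ ^ 2 ∂P := by
  have hinner : Integrable (fun ξ ↦ 2 * ⟪x, a ξ⟫) P :=
    ((innerSL ℝ x).integrable_comp ha).const_mul 2
  have hcross : ∫ ξ, ⟪x, a ξ⟫ ∂P = 0 := by rw [integral_inner ha, hmean, inner_zero_right]
  simp only [norm_sub_sq_real]
  rw [integral_add (f := fun ξ ↦ ‖x‖ ^ 2 - 2 * ⟪x, a ξ⟫) ((integrable_const _).sub hinner) ha2,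
    integral_sub (integrable_const _) hinner,
    integral_const, integral_const_mul, hcross]
  simp

end MeanZero

end

theorem sppm_one_step_general {X : Type*} [NormedAddCommGroup X] [InnerProductSpace ℝ X]
    [FiniteDimensional ℝ X]
    {Ω : Type*} [MeasurableSpace Ω] (P : Measure Ω) [IsProbabilityMeasure P]
    (A : Ω → X → Set X) (μ γ : ℝ) (hμ : 0 < μ) (hγ : 0 < γ)
    (hmono : ∀ ξ x u y v, u ∈ A ξ x → v ∈ A ξ y → μ * ‖x - y‖ ^ 2 ≤ ⟪u - v, x - y⟫)
    (J : Ω → X → X) (hJ : ∀ ξ z, ∃ u ∈ A ξ (J ξ z), z - J ξ z = γ • u)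
    (xstar : X) (astar : Ω → X) (hastar : ∀ ξ, astar ξ ∈ A ξ xstar)
    (hmean : ∫ ξ, astar ξ ∂P = 0)
    (hint0 : Integrable astar P)
    (hint1 : Integrable (fun ξ => ‖astar ξ‖ ^ 2) P)
    (xk : X) :
    ∫ ξ, ‖J ξ xk - xstar‖ ^ 2 ∂P ≤
      ((1 + γ * μ)⁻¹) ^ 2 * ‖xk - xstar‖ ^ 2 +
        ((1 + γ * μ)⁻¹) ^ 2 * γ ^ 2 * ∫ ξ, ‖astar ξ‖ ^ 2 ∂P := by
  have hγμ : 0 < 1 + γ * μ := by positivity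
  have hstep : ∀ ξ, ‖J ξ xk - xstar‖ ^ 2 ≤
      ((1 + γ * μ)⁻¹) ^ 2 * ‖(xk - xstar) - γ • astar ξ‖ ^ 2 := fun ξ ↦ by
    obtain ⟨u, hu, hxk⟩ := hJ ξ xk
    have h := IsStronglyMonotone.norm_sub_sq_le (hmono ξ) hγ.le hγμ hu (hastar ξ)
    rwa [← hxk, add_sub_cancel, sub_add_eq_sub_sub] at h
  have hsq : (fun ξ ↦ ‖γ • astar ξ‖ ^ 2) = fun ξ ↦ γ ^ 2 * ‖astar ξ‖ ^ 2 := by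
    simp only [norm_smul, mul_pow, Real.norm_eq_abs, sq_abs]
  have hint0' : Integrable (fun ξ ↦ γ • astar ξ) P := hint0.smul γ
  have hint1' : Integrable (fun ξ ↦ ‖γ • astar ξ‖ ^ 2) P := hsq ▸ hint1.const_mul _
  have hmean' : ∫ ξ, γ • astar ξ ∂P = 0 := by rw [integral_smul, hmean, smul_zero]
  calc ∫ ξ, ‖J ξ xk - xstar‖ ^ 2 ∂P
      ≤ ∫ ξ, ((1 + γ * μ)⁻¹) ^ 2 * ‖(xk - xstar) - γ • astar ξ‖ ^ 2 ∂P :=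
        integral_mono_of_nonneg (.of_forall fun _ ↦ by positivity)
          ((integrable_norm_sub_sq hint0' hint1' _).const_mul _) (.of_forall hstep)
    _ = _ := by
      rw [integral_const_mul, integral_norm_sub_sq_of_integral_eq_zero hint0' hint1' hmean', hsq,
        integral_const_mul]
      ring

/-- One-step conditional bound for the stochastic proximal point method (SPPM). -/
theorem sppm_one_step {X : Type*} [NormedAddCommGroup X] [InnerProductSpace ℝ X]
    [FiniteDimensional ℝ X]
    {Ω : Type*} [MeasurableSpace Ω] (P : Measure Ω) [IsProbabilityMeasure P]
    (A : Ω → X → Set X) (μ γ : ℝ) (hμ : 0 < μ) (hγ : 0 < γ)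
    (hmono : ∀ ξ x u y v, u ∈ A ξ x → v ∈ A ξ y → μ * ‖x - y‖ ^ 2 ≤ ⟪u - v, x - y⟫)
    (J : Ω → X → X) (hJ : ∀ ξ z, ∃ u ∈ A ξ (J ξ z), z - J ξ z = γ • u)
    (xstar : X) (astar : Ω → X) (hastar : ∀ ξ, astar ξ ∈ A ξ xstar)
    (hmean : ∫ ξ, astar ξ ∂P = 0)
    (hint0 : Integrable astar P)
    (hint1 : Integrable (fun ξ => ‖astar ξ‖ ^ 2) P)
    (xk : X)
    (hint2 : Integrable (fun ξ => ‖J ξ xk - xstar‖ ^ 2) P) :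
    ∫ ξ, ‖J ξ xk - xstar‖ ^ 2 ∂P ≤
      ((1 + γ * μ)⁻¹) ^ 2 * ‖xk - xstar‖ ^ 2 +
        ((1 + γ * μ)⁻¹) ^ 2 * γ ^ 2 * ∫ ξ, ‖astar ξ‖ ^ 2 ∂P :=
  sppm_one_step_general P A μ γ hμ hγ hmono J hJ xstar astar hastar hmean hint0 hint1 xk
end

section
/- Tightness of the SPPM bound: let A_ξ(x) = μ(x − x⋆) + a_ξ⋆ for μ > 0, x⋆ ∈ X, and vectors a_ξ⋆ with E_ξ[a_ξ⋆] = 0. Then SPPM with stepsize γ > 0 satisfies E[‖x^k − x⋆‖²] = (1+γμ)^{-2k} ‖x^0 − x⋆‖² + (1 − (1+γμ)^{-2k}) γ²σ⋆² / ((1+γμ)² − 1) with equality, where σ⋆² = E_ξ[‖a_ξ⋆‖²]. -/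
/-!
Write `b = 1 + γμ`. The resolvent maps `x` to a point whose error is
`x^{k+1} - x⋆ = b⁻¹ ((x^k - x⋆) - γ a_{ξ^k}⋆)`. The noise `a_{ξ^k}⋆` is independent of `x^k` and
has mean zero, so it is orthogonal in `L²` to the current error, and the mean squared error
`e_k = E‖x^k - x⋆‖²` satisfies the exact affine recursion `e_{k+1} = b⁻² (e_k + γ² σ⋆²)`.
Solving this recursion gives the stated formula.
-/

open RealInnerProductSpace MeasureTheory

/-- The SPPM iterates as a function of the first `k` i.i.d. samples. -/
def sppmIter {X Ω : Type*} (J : Ω → X → X) (x0 : X) : (k : ℕ) → (Fin k → Ω) → X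
  | 0, _ => x0
  | k + 1, s => J (s (Fin.last k)) (sppmIter J x0 k fun i => s i.castSucc)

section MeanZeroNoise

variable {Ω T X : Type*} [MeasurableSpace Ω] [MeasurableSpace T]
  [NormedAddCommGroup X] [InnerProductSpace ℝ X] [CompleteSpace X]
  {P : Measure Ω} [IsProbabilityMeasure P] {w : Ω → X}

theorem integral_norm_sub_sq_of_integral_eq_zero_s7 (hw : MemLp w 2 P)
    (hw0 : ∫ ω, w ω ∂P = 0) (u : X) :
    ∫ ω, ‖u - w ω‖ ^ 2 ∂P = ‖u‖ ^ 2 + ∫ ω, ‖w ω‖ ^ 2 ∂P := by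
  have hw1 : Integrable w P := hw.integrable one_le_two
  have hcross : Integrable (fun ω => 2 * ⟪u, w ω⟫) P := (hw1.const_inner u).const_mul 2
  have hcross0 : ∫ ω, 2 * ⟪u, w ω⟫ ∂P = 0 := by
    rw [integral_const_mul, integral_inner hw1, hw0, inner_zero_right, mul_zero]
  simp_rw [norm_sub_sq_real]
  rw [integral_add _ (hw.integrable_norm_pow two_ne_zero),
    integral_sub (integrable_const _) hcross, hcross0]
  · simp
  · exact (integrable_const _).sub hcross

theorem integral_norm_sub_sq_prod_of_integral_eq_zero {Q : Measure T} [IsProbabilityMeasure Q]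
    {v : T → X} (hv : MemLp v 2 Q) (hw : MemLp w 2 P) (hw0 : ∫ ω, w ω ∂P = 0) :
    ∫ p, ‖v p.2 - w p.1‖ ^ 2 ∂(P.prod Q) = ∫ t, ‖v t‖ ^ 2 ∂Q + ∫ ω, ‖w ω‖ ^ 2 ∂P := by
  have hint : Integrable (fun p : Ω × T => ‖v p.2 - w p.1‖ ^ 2) (P.prod Q) :=
    ((hv.comp_snd P).sub (hw.comp_fst Q)).integrable_norm_pow two_ne_zero
  rw [integral_prod_symm _ hint]
  simp only [integral_norm_sub_sq_of_integral_eq_zero_s7 hw hw0]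
  rw [integral_add (hv.integrable_norm_pow two_ne_zero) (integrable_const _), integral_const]
  simp

end MeanZeroNoise

theorem eq_pow_mul_add_of_forall_succ_eq {u : ℕ → ℝ} {q r : ℝ} (hq : q ≠ 1)
    (hu : ∀ n, u (n + 1) = q * u n + r) (n : ℕ) :
    u n = q ^ n * u 0 + (1 - q ^ n) * r / (1 - q) := by
  have hq' : 1 - q ≠ 0 := sub_ne_zero.mpr hq.symm
  induction n with
  | zero => simp
  | succ n ih =>
    rw [hu, ih, pow_succ]
    field_simp
    ring

theorem resolvent_sub_eq {X Ω : Type*} [NormedAddCommGroup X] [InnerProductSpace ℝ X]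
    {γ μ : ℝ} {xstar : X} {astar : Ω → X} {J : Ω → X → X} (hb : 1 + γ * μ ≠ 0)
    (hJ : ∀ ξ x, J ξ x = (1 + γ * μ)⁻¹ • (x + (γ * μ) • xstar - γ • astar ξ)) (ξ : Ω) (x : X) :
    J ξ x - xstar = (1 + γ * μ)⁻¹ • (x - xstar - γ • astar ξ) := by
  rw [hJ]
  match_scalars
  all_goals field_simp
  ring

theorem sppmIter_succ_eq_comp {X Ω : Type*} [MeasurableSpace Ω] (J : Ω → X → X) (x0 : X)
    (n : ℕ) :
    sppmIter J x0 (n + 1) = (fun p : Ω × (Fin n → Ω) => J p.1 (sppmIter J x0 n p.2)) ∘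
      MeasurableEquiv.piFinSuccAbove (fun _ => Ω) (Fin.last n) := by
  funext s
  simp only [sppmIter, MeasurableEquiv.piFinSuccAbove, Fin.insertNthEquiv_last,
    MeasurableEquiv.coe_mk, Function.comp_apply, Fin.snocEquiv_symm_apply]
  rfl

section SPPM

variable {X Ω : Type*} [NormedAddCommGroup X] [InnerProductSpace ℝ X] [MeasurableSpace Ω]
  {P : Measure Ω} [IsProbabilityMeasure P] {γ μ : ℝ} {xstar x0 : X} {astar : Ω → X}
  {J : Ω → X → X}

theorem memLp_sppmIter
    (hJ : ∀ ξ x, J ξ x = (1 + γ * μ)⁻¹ • (x + (γ * μ) • xstar - γ • astar ξ))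
    (ha : MemLp astar 2 P) : ∀ n, MemLp (sppmIter J x0 n) 2 (Measure.pi fun _ : Fin n => P)
  | 0 => memLp_const x0
  | n + 1 => by
    rw [sppmIter_succ_eq_comp]
    refine MemLp.comp_measurePreserving ?_
      (measurePreserving_piFinSuccAbove (fun _ => P) (Fin.last n))
    simp_rw [hJ]
    exact ((((memLp_sppmIter hJ ha n).comp_snd P).add (memLp_const _)).sub
      ((ha.comp_fst _).const_smul γ)).const_smul _

theorem integral_norm_sppmIter_succ_sub_sq [CompleteSpace X] (hb : 1 + γ * μ ≠ 0)
    (hJ : ∀ ξ x, J ξ x = (1 + γ * μ)⁻¹ • (x + (γ * μ) • xstar - γ • astar ξ))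
    (ha : MemLp astar 2 P) (ha0 : ∫ ξ, astar ξ ∂P = 0) (n : ℕ) :
    ∫ s, ‖sppmIter J x0 (n + 1) s - xstar‖ ^ 2 ∂(Measure.pi fun _ : Fin (n + 1) => P) =
      ((1 + γ * μ)⁻¹) ^ 2 * (∫ s, ‖sppmIter J x0 n s - xstar‖ ^ 2 ∂(Measure.pi fun _ : Fin n => P)
        + γ ^ 2 * ∫ ξ, ‖astar ξ‖ ^ 2 ∂P) := by
  have herr : MemLp (fun s => sppmIter J x0 n s - xstar) 2 (Measure.pi fun _ : Fin n => P) :=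
    (memLp_sppmIter hJ ha n).sub (memLp_const xstar)
  have hnoise0 : ∫ ξ, γ • astar ξ ∂P = 0 := by rw [integral_smul, ha0, smul_zero]
  rw [sppmIter_succ_eq_comp]
  calc _ = ∫ p, ‖J p.1 (sppmIter J x0 n p.2) - xstar‖ ^ 2
          ∂(P.prod (Measure.pi fun _ : Fin n => P)) :=
        (measurePreserving_piFinSuccAbove (fun _ => P) (Fin.last n)).integral_comp' _
    _ = ∫ p, ((1 + γ * μ)⁻¹) ^ 2 * ‖(sppmIter J x0 n p.2 - xstar) - γ • astar p.1‖ ^ 2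
          ∂(P.prod (Measure.pi fun _ : Fin n => P)) := by
        simp_rw [resolvent_sub_eq hb hJ, norm_smul, mul_pow, Real.norm_eq_abs, sq_abs]
    _ = _ := by
        rw [integral_const_mul,
          integral_norm_sub_sq_prod_of_integral_eq_zero (w := fun ξ => γ • astar ξ) herr
            (ha.const_smul γ) hnoise0]
        simp_rw [norm_smul, mul_pow, Real.norm_eq_abs, sq_abs, integral_const_mul]

end SPPM

theorem sppm_bound_tight_general {X : Type*} [NormedAddCommGroup X] [InnerProductSpace ℝ X]
    [FiniteDimensional ℝ X]
    {Ω : Type*} [MeasurableSpace Ω] (P : Measure Ω) [IsProbabilityMeasure P]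
    (μ γ : ℝ) (hμ : 0 < μ) (hγ : 0 < γ)
    (xstar : X) (astar : Ω → X)
    (hmean : ∫ ξ, astar ξ ∂P = 0)
    (hint0 : Integrable astar P)
    (hint : Integrable (fun ξ => ‖astar ξ‖ ^ 2) P)
    (J : Ω → X → X)
    (hJ : ∀ ξ x, J ξ x = (1 + γ * μ)⁻¹ • (x + (γ * μ) • xstar - γ • astar ξ))
    (x0 : X) (k : ℕ) :
    ∫ s, ‖sppmIter J x0 k s - xstar‖ ^ 2 ∂(Measure.pi fun _ : Fin k => P) =
      ((1 + γ * μ)⁻¹) ^ (2 * k) * ‖x0 - xstar‖ ^ 2 +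
        (1 - ((1 + γ * μ)⁻¹) ^ (2 * k)) * (γ ^ 2 * ∫ ξ, ‖astar ξ‖ ^ 2 ∂P) /
          ((1 + γ * μ) ^ 2 - 1) := by
  have hb : 1 < 1 + γ * μ := lt_add_of_pos_right 1 (mul_pos hγ hμ)
  have hq : ((1 + γ * μ)⁻¹) ^ 2 ≠ 1 :=
    (pow_lt_one₀ (by positivity) (inv_lt_one_of_one_lt₀ hb) two_ne_zero).ne
  have ha : MemLp astar 2 P := (memLp_two_iff_integrable_sq_norm hint0.1).2 hint
  have hrec := integral_norm_sppmIter_succ_sub_sq (x0 := x0) (by positivity) hJ ha hmean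
  have hclosed := eq_pow_mul_add_of_forall_succ_eq
    (u := fun n => ∫ s, ‖sppmIter J x0 n s - xstar‖ ^ 2 ∂(Measure.pi fun _ : Fin n => P)) hq
    (fun n => (hrec n).trans (mul_add _ _ _)) k
  have hinit : ∫ s, ‖sppmIter J x0 0 s - xstar‖ ^ 2 ∂(Measure.pi fun _ : Fin 0 => P) =
      ‖x0 - xstar‖ ^ 2 := by
    simp [sppmIter]
  have hb2 : (1 + γ * μ) ^ 2 - 1 ≠ 0 := by nlinarith
  rw [pow_mul, hclosed, hinit]
  field_simp

/-- Tightness of the SPPM bound: for the operators `A_ξ(x) = μ(x − x⋆) + a_ξ⋆`,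
whose resolvents of `γ A_ξ` are `x ↦ (1+γμ)⁻¹ (x + γμ x⋆ − γ a_ξ⋆)`, the SPPM bound holds
with equality. -/
theorem sppm_bound_tight {X : Type*} [NormedAddCommGroup X] [InnerProductSpace ℝ X]
    [FiniteDimensional ℝ X] [MeasurableSpace X] [BorelSpace X]
    {Ω : Type*} [MeasurableSpace Ω] (P : Measure Ω) [IsProbabilityMeasure P]
    (μ γ : ℝ) (hμ : 0 < μ) (hγ : 0 < γ)
    (xstar : X) (astar : Ω → X) (hmeas : Measurable astar)
    (hmean : ∫ ξ, astar ξ ∂P = 0)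
    (hint0 : Integrable astar P)
    (hint : Integrable (fun ξ => ‖astar ξ‖ ^ 2) P)
    (J : Ω → X → X)
    (hJ : ∀ ξ x, J ξ x = (1 + γ * μ)⁻¹ • (x + (γ * μ) • xstar - γ • astar ξ))
    (x0 : X) (k : ℕ) :
    ∫ s, ‖sppmIter J x0 k s - xstar‖ ^ 2 ∂(Measure.pi fun _ : Fin k => P) =
      ((1 + γ * μ)⁻¹) ^ (2 * k) * ‖x0 - xstar‖ ^ 2 +
        (1 - ((1 + γ * μ)⁻¹) ^ (2 * k)) * (γ ^ 2 * ∫ ξ, ‖astar ξ‖ ^ 2 ∂P) /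
          ((1 + γ * μ) ^ 2 - 1) :=
  sppm_bound_tight_general P μ γ hμ hγ xstar astar hmean hint0 hint J hJ x0 k
end

section
/- L-SVRP Lyapunov contraction (one step): with α = γμ/p and V^k = ‖x^k − x⋆‖² + α‖w^k − x⋆‖², given the bounds E[‖x^{k+1}−x⋆‖² | F^k] ≤ (1+γμ)^{-2}‖x^k−x⋆‖² + γ²δ²(1+γμ)^{-2}‖w^k−x⋆‖² and E[‖w^{k+1}−x⋆‖² | F^k] = (1−p)‖w^k−x⋆‖² + p·E[‖x^{k+1}−x⋆‖² | F^k], one has E[V^{k+1} | F^k] ≤ max{ 1/(1+γμ), 1 − p + γδ²p/(μ(1+γμ)) } · V^k. -/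
/-! Since `α p = γμ`, the Lyapunov value after one step is `(1 + γμ) x' + α (1 - p) b`.
Multiplying the bound on `x'` by `1 + γμ` leaves a factor `1/(1 + γμ)` on `a` and, after
pulling out `α`, the factor `1 - p + γδ²p/(μ(1 + γμ))` on `α b`; a nonnegative combination
`r a + s (α b)` is at most `max r s · (a + α b)`. -/

theorem mul_add_mul_le_max_mul_add {R : Type*} [Semiring R] [LinearOrder R] [IsOrderedRing R]
    {r s a b : R} (ha : 0 ≤ a) (hb : 0 ≤ b) :
    r * a + s * b ≤ max r s * (a + b) := by
  rw [mul_add]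
  gcongr
  exacts [le_max_left r s, le_max_right r s]

theorem lsvrp_lyapunov_one_step_general (γ μ δ p a b x' w' : ℝ)
    (hγ : 0 < γ) (hμ : 0 < μ) (hp : 0 < p)
    (ha : 0 ≤ a) (hb : 0 ≤ b)
    (hx : x' ≤ ((1 + γ * μ)⁻¹) ^ 2 * a + γ ^ 2 * δ ^ 2 * ((1 + γ * μ)⁻¹) ^ 2 * b)
    (hw : w' = (1 - p) * b + p * x') :
    x' + γ * μ / p * w' ≤
      max (1 / (1 + γ * μ)) (1 - p + γ * δ ^ 2 * p / (μ * (1 + γ * μ))) *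
        (a + γ * μ / p * b) := by
  have hc : 0 < 1 + γ * μ := by positivity
  have hV : x' + γ * μ / p * w' = (1 + γ * μ) * x' + γ * μ / p * (1 - p) * b := by
    rw [hw]
    field_simp
    ring
  have hx' : (1 + γ * μ) * x' ≤ 1 / (1 + γ * μ) * a + γ ^ 2 * δ ^ 2 / (1 + γ * μ) * b := by
    calc (1 + γ * μ) * x'
        ≤ (1 + γ * μ) * (((1 + γ * μ)⁻¹) ^ 2 * a + γ ^ 2 * δ ^ 2 * ((1 + γ * μ)⁻¹) ^ 2 * b) := by
          gcongr
      _ = 1 / (1 + γ * μ) * a + γ ^ 2 * δ ^ 2 / (1 + γ * μ) * b := by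
          field_simp
  have hrate : γ ^ 2 * δ ^ 2 / (1 + γ * μ) * b + γ * μ / p * (1 - p) * b
      = (1 - p + γ * δ ^ 2 * p / (μ * (1 + γ * μ))) * (γ * μ / p * b) := by
    field_simp
    ring
  calc x' + γ * μ / p * w'
      ≤ 1 / (1 + γ * μ) * a + (1 - p + γ * δ ^ 2 * p / (μ * (1 + γ * μ))) * (γ * μ / p * b) := by
        linarith
    _ ≤ _ := mul_add_mul_le_max_mul_add ha (by positivity)

/-- One-step Lyapunov contraction of L-SVRP, with `α = γμ/p`, where `a = ‖x^k − x⋆‖²`,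
`b = ‖w^k − x⋆‖²`, `x' = E[‖x^{k+1}−x⋆‖²|F^k]` and `w' = E[‖w^{k+1}−x⋆‖²|F^k]`. -/
theorem lsvrp_lyapunov_one_step (γ μ δ p a b x' w' : ℝ)
    (hγ : 0 < γ) (hμ : 0 < μ) (hδ : 0 < δ) (hp : 0 < p) (hp1 : p ≤ 1)
    (ha : 0 ≤ a) (hb : 0 ≤ b)
    (hx : x' ≤ ((1 + γ * μ)⁻¹) ^ 2 * a + γ ^ 2 * δ ^ 2 * ((1 + γ * μ)⁻¹) ^ 2 * b)
    (hw : w' = (1 - p) * b + p * x') :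
    x' + γ * μ / p * w' ≤
      max (1 / (1 + γ * μ)) (1 - p + γ * δ ^ 2 * p / (μ * (1 + γ * μ))) *
        (a + γ * μ / p * b) :=
  lsvrp_lyapunov_one_step_general γ μ δ p a b x' w' hγ hμ hp ha hb hx hw
end

section
/- Point-SAGA Lyapunov contraction (one step): with α = nγμ and V^k = ‖x^k − x⋆‖² + (α/n)∑_{i=1}^n ‖w_i^k − x⋆‖², given the bounds E[‖x^{k+1}−x⋆‖² | F^k] ≤ (1+γμ)^{-2}‖x^k−x⋆‖² + (γ²δ̃²/(n(1+γμ)²))∑_{i=1}^n‖w_i^k−x⋆‖² and (1/n)∑_i E[‖w_i^{k+1}−x⋆‖² | F^k] = (1−1/n)(1/n)∑_i‖w_i^k−x⋆‖² + (1/n)E[‖x^{k+1}−x⋆‖² | F^k], one has E[V^{k+1} | F^k] ≤ max{ 1/(1+γμ), 1 − 1/n + γδ̃²/(nμ(1+γμ)) } · V^k. -/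
/-! With `q = γμ`, the second hypothesis says `w' = (1 - 1/n) b + x'`, so
`x' + q w' = (1 + q) x' + q (1 - 1/n) b`. Multiplying the first hypothesis by `1 + q` turns this
into `(1 + q)⁻¹ a + q ρ b` with `ρ` the second rate, and each coefficient is at most the
maximum of the two rates. -/

lemma mul_add_mul_mul_le_max_mul_add {p r q a b : ℝ} (ha : 0 ≤ a) (hb : 0 ≤ b) (hq : 0 ≤ q) :
    p * a + q * (r * b) ≤ max p r * (a + q * b) := by
  have hpa : p * a ≤ max p r * a := mul_le_mul_of_nonneg_right (le_max_left p r) ha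
  have hrb : r * b ≤ max p r * b := mul_le_mul_of_nonneg_right (le_max_right p r) hb
  nlinarith [mul_le_mul_of_nonneg_left hrb hq]

lemma lyapunov_step_le_max_mul {q ρ β a b x' w' : ℝ} (hq : 0 < q) (ha : 0 ≤ a) (hb : 0 ≤ b)
    (hx : x' ≤ ((1 + q)⁻¹) ^ 2 * a + β * b) (hw : w' = ρ * b + x') :
    x' + q * w' ≤ max (1 / (1 + q)) (ρ + (1 + q) * β / q) * (a + q * b) := by
  have hq1 : 0 < 1 + q := by linarith
  calc x' + q * w' = (1 + q) * x' + q * (ρ * b) := by rw [hw]; ring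
    _ ≤ (1 + q) * (((1 + q)⁻¹) ^ 2 * a + β * b) + q * (ρ * b) := by gcongr
    _ = 1 / (1 + q) * a + q * ((ρ + (1 + q) * β / q) * b) := by field_simp; ring
    _ ≤ _ := mul_add_mul_mul_le_max_mul_add ha hb hq.le

theorem point_saga_lyapunov_one_step_general (n : ℕ) (hn : 2 ≤ n) (γ μ δ a b x' w' : ℝ)
    (hγ : 0 < γ) (hμ : 0 < μ)
    (ha : 0 ≤ a) (hb : 0 ≤ b)
    (hx : x' ≤ ((1 + γ * μ)⁻¹) ^ 2 * a + γ ^ 2 * δ ^ 2 / ((n : ℝ) * (1 + γ * μ) ^ 2) * b)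
    (hw : 1 / (n : ℝ) * w' = (1 - 1 / (n : ℝ)) * (1 / (n : ℝ)) * b + 1 / (n : ℝ) * x') :
    x' + γ * μ * w' ≤
      max (1 / (1 + γ * μ)) (1 - 1 / (n : ℝ) + γ * δ ^ 2 / ((n : ℝ) * μ * (1 + γ * μ))) *
        (a + γ * μ * b) := by
  have hn0 : (n : ℝ) ≠ 0 := Nat.cast_ne_zero.mpr (by omega)
  have hw' : w' = (1 - 1 / (n : ℝ)) * b + x' :=
    mul_left_cancel₀ (one_div_ne_zero hn0) (by rw [hw]; ring)
  have hrate : 1 - 1 / (n : ℝ) + (1 + γ * μ) * (γ ^ 2 * δ ^ 2 / ((n : ℝ) * (1 + γ * μ) ^ 2)) /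
      (γ * μ) = 1 - 1 / (n : ℝ) + γ * δ ^ 2 / ((n : ℝ) * μ * (1 + γ * μ)) := by
    field_simp
  rw [← hrate]
  exact lyapunov_step_le_max_mul (mul_pos hγ hμ) ha hb hx hw'

/-- One-step Lyapunov contraction of Point-SAGA, with `α = nγμ`, where `a = ‖x^k − x⋆‖²`,
`b = ∑ᵢ ‖wᵢ^k − x⋆‖²`, `x' = E[‖x^{k+1}−x⋆‖²|F^k]`, `w' = ∑ᵢ E[‖wᵢ^{k+1}−x⋆‖²|F^k]`. -/
theorem point_saga_lyapunov_one_step (n : ℕ) (hn : 2 ≤ n) (γ μ δ a b x' w' : ℝ)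
    (hγ : 0 < γ) (hμ : 0 < μ) (hδ : 0 < δ)
    (ha : 0 ≤ a) (hb : 0 ≤ b)
    (hx : x' ≤ ((1 + γ * μ)⁻¹) ^ 2 * a + γ ^ 2 * δ ^ 2 / ((n : ℝ) * (1 + γ * μ) ^ 2) * b)
    (hw : 1 / (n : ℝ) * w' = (1 - 1 / (n : ℝ)) * (1 / (n : ℝ)) * b + 1 / (n : ℝ) * x') :
    x' + γ * μ * w' ≤
      max (1 / (1 + γ * μ)) (1 - 1 / (n : ℝ) + γ * δ ^ 2 / ((n : ℝ) * μ * (1 + γ * μ))) *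
        (a + γ * μ * b) :=
  point_saga_lyapunov_one_step_general n hn γ μ δ a b x' w' hγ hμ ha hb hx hw
end
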